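/- arXiv:2008.02375 — 2 statements merged into one kernel-verified Lean document; each statement's English description precedes it below -/
import Mathlib

section
/- Let G be a countable graph with the extension property (for all disjoint finite A, B ⊆ V there is a vertex adjacent to all of A and none of B). Then for every partition of the vertex set into two parts, at least one part induces a subgraph isomorphic to G. -/
/-!
Back and forth: if `H` has the extension property, a finite partial isomorphism from `G` to `H`
extends to any further vertex `v` of `G`, since the extension property yields a new vertex of `H`
adjacent exactly to the images of the neighbours of `v` among the matched vertices. A generic ideal
of finite partial isomorphisms, meeting all these cofinal sets on both sides, glues to an
isomorphism.

Indivisibility: if `G[R]` fails the extension property at finite `A₀, B₀ ⊆ R`, then for finite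
`A, B ⊆ Rᶜ` a witness in `G` for `(A₀ ∪ A, B₀ ∪ B)` cannot lie in `R`, so it is a witness for
`(A, B)` in `G[Rᶜ]`.
-/

namespace SimpleGraph

variable {V W : Type*} {G : SimpleGraph V} {H : SimpleGraph W}

def IsExtensionWitness (G : SimpleGraph V) (A B : Set V) (v : V) : Prop :=
  v ∉ A ∪ B ∧ (∀ a ∈ A, G.Adj v a) ∧ ∀ b ∈ B, ¬ G.Adj v b

def HasExtensionProperty (G : SimpleGraph V) : Prop :=
  ∀ A B : Set V, A.Finite → B.Finite → Disjoint A B → ∃ v, G.IsExtensionWitness A B v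

theorem hasExtensionProperty_iff_finset [DecidableEq V] :
    G.HasExtensionProperty ↔ ∀ A B : Finset V, Disjoint A B →
      ∃ v, v ∉ A ∪ B ∧ (∀ a ∈ A, G.Adj v a) ∧ ∀ b ∈ B, ¬ G.Adj v b := by
  refine ⟨fun h A B hAB => ?_, fun h A B hA hB hAB => ?_⟩
  · simpa [IsExtensionWitness] using h A B A.finite_toSet B.finite_toSet (by simpa)
  · simpa [IsExtensionWitness] using h hA.toFinset hB.toFinset (by simpa)

theorem IsExtensionWitness.mono {A A' B B' : Set V} {v : V} (h : G.IsExtensionWitness A' B' v)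
    (hA : A ⊆ A') (hB : B ⊆ B') : G.IsExtensionWitness A B v :=
  ⟨fun hv => h.1 (Set.union_subset_union hA hB hv), fun a ha => h.2.1 a (hA ha),
    fun b hb => h.2.2 b (hB hb)⟩

theorem isExtensionWitness_induce_iff {R : Set V} {A B : Set R} {v : R} :
    (G.induce R).IsExtensionWitness A B v ↔
      G.IsExtensionWitness (Subtype.val '' A) (Subtype.val '' B) v := by
  simp [IsExtensionWitness, Subtype.val_injective.mem_set_image]

theorem HasExtensionProperty.induce_or_induce_compl (hG : G.HasExtensionProperty) (R : Set V) :
    (G.induce R).HasExtensionProperty ∨ (G.induce Rᶜ).HasExtensionProperty := by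
  refine or_iff_not_imp_left.2 fun hR A B hA hB hAB => ?_
  obtain ⟨A₀, B₀, hA₀, hB₀, hAB₀, hno⟩ : ∃ A₀ B₀ : Set R, A₀.Finite ∧ B₀.Finite ∧
      Disjoint A₀ B₀ ∧ ∀ v, ¬ (G.induce R).IsExtensionWitness A₀ B₀ v := by
    simpa [HasExtensionProperty] using hR
  have hRRc (X : Set R) (Y : Set (Rᶜ : Set V)) : Disjoint (Subtype.val '' X) (Subtype.val '' Y) :=
    disjoint_compl_right.mono (Subtype.coe_image_subset _ _) (Subtype.coe_image_subset _ _)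
  have hdisj : Disjoint (Subtype.val '' A₀ ∪ Subtype.val '' A)
      (Subtype.val '' B₀ ∪ Subtype.val '' B) := by
    simp only [Set.disjoint_union_left, Set.disjoint_union_right,
      Set.disjoint_image_iff Subtype.val_injective, hAB₀, hAB, hRRc, true_and, and_true]
    exact (hRRc _ _).symm
  obtain ⟨v, hv⟩ :=
    hG _ _ ((hA₀.image _).union (hA.image _)) ((hB₀.image _).union (hB.image _)) hdisj
  have hvR : v ∉ R := fun hvR => hno ⟨v, hvR⟩
    (isExtensionWitness_induce_iff.2 (hv.mono Set.subset_union_left Set.subset_union_left))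
  exact ⟨⟨v, hvR⟩, isExtensionWitness_induce_iff.2
    (hv.mono Set.subset_union_right Set.subset_union_right)⟩

def Compatible (G : SimpleGraph V) (H : SimpleGraph W) (p q : V × W) : Prop :=
  (p.1 = q.1 ↔ p.2 = q.2) ∧ (G.Adj p.1 q.1 ↔ H.Adj p.2 q.2)

theorem Compatible.refl (p : V × W) : Compatible G H p p :=
  ⟨iff_of_true rfl rfl, iff_of_false G.irrefl H.irrefl⟩

theorem Compatible.symm {p q : V × W} (h : Compatible G H p q) : Compatible G H q p :=
  ⟨by rw [eq_comm, h.1, eq_comm], by rw [G.adj_comm, h.2, H.adj_comm]⟩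

theorem Compatible.swap {p q : V × W} (h : Compatible G H p q) :
    Compatible H G p.swap q.swap :=
  ⟨h.1.symm, h.2.symm⟩

def IsPartialIso (G : SimpleGraph V) (H : SimpleGraph W) (s : Set (V × W)) : Prop :=
  s.Pairwise (Compatible G H)

theorem IsPartialIso.compatible {s : Set (V × W)} (hs : G.IsPartialIso H s) {p q : V × W}
    (hp : p ∈ s) (hq : q ∈ s) : Compatible G H p q := by
  rcases eq_or_ne p q with rfl | hpq
  · exact Compatible.refl p
  · exact hs hp hq hpq

theorem IsPartialIso.swap {s : Set (V × W)} (hs : G.IsPartialIso H s) :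
    H.IsPartialIso G (Prod.swap ⁻¹' s) :=
  fun _ hp _ hq hpq => (hs hp hq (Prod.swap_injective.ne hpq)).swap

theorem IsPartialIso.exists_insert_left (hH : H.HasExtensionProperty) {s : Set (V × W)}
    (hs : G.IsPartialIso H s) (hfin : s.Finite) (v : V) :
    ∃ w, G.IsPartialIso H (insert (v, w) s) := by
  by_cases hv : ∃ w, (v, w) ∈ s
  · obtain ⟨w, hw⟩ := hv
    exact ⟨w, by rwa [Set.insert_eq_of_mem hw]⟩
  simp only [not_exists] at hv
  set A := Prod.snd '' {p ∈ s | G.Adj v p.1}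
  set B := Prod.snd '' {p ∈ s | ¬ G.Adj v p.1}
  -- `s` matches each vertex of `W` with at most one vertex of `V`
  have hAB : Disjoint A B := by
    rw [Set.disjoint_left]
    rintro _ ⟨p, ⟨hp, hpv⟩, rfl⟩ ⟨q, ⟨hq, hqv⟩, hpq⟩
    exact hqv ((hs.compatible hp hq).1.2 hpq.symm ▸ hpv)
  obtain ⟨w, hwAB, hwA, hwB⟩ := hH A B ((hfin.subset (Set.sep_subset _ _)).image _)
    ((hfin.subset (Set.sep_subset _ _)).image _) hAB
  have hcompat : ∀ q ∈ s, Compatible G H (v, w) q := by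
    intro q hq
    refine ⟨iff_of_false (fun hvq => hv q.2 (by rw [show v = q.1 from hvq]; exact hq))
      fun hwq => hwAB ?_, ?_, fun hwq => ?_⟩
    · by_cases hvq : G.Adj v q.1
      · exact Or.inl ⟨q, ⟨hq, hvq⟩, hwq.symm⟩
      · exact Or.inr ⟨q, ⟨hq, hvq⟩, hwq.symm⟩
    · exact fun hvq => hwA _ ⟨q, ⟨hq, hvq⟩, rfl⟩
    · by_contra hvq
      exact hwB _ ⟨q, ⟨hq, hvq⟩, rfl⟩ hwq
  exact ⟨w, hs.insert fun q hq _ => ⟨hcompat q hq, (hcompat q hq).symm⟩⟩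

theorem IsPartialIso.exists_insert_right (hG : G.HasExtensionProperty) {s : Set (V × W)}
    (hs : G.IsPartialIso H s) (hfin : s.Finite) (w : W) :
    ∃ v, G.IsPartialIso H (insert (v, w) s) := by
  obtain ⟨v, hv⟩ := hs.swap.exists_insert_left hG (hfin.preimage Prod.swap_injective.injOn) w
  refine ⟨v, ?_⟩
  simpa [← Set.image_swap_eq_preimage_swap, Set.image_insert_eq, Set.image_image] using hv.swap

theorem IsPartialIso.nonempty_iso {s : Set (V × W)} (hs : G.IsPartialIso H s)
    (hleft : ∀ v, ∃ w, (v, w) ∈ s) (hright : ∀ w, ∃ v, (v, w) ∈ s) :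
    Nonempty (G ≃g H) := by
  choose f hf using hleft
  choose g hg using hright
  exact ⟨⟨⟨f, g, fun v => (hs.compatible (hg (f v)) (hf v)).1.2 rfl,
    fun w => (hs.compatible (hf (g w)) (hg w)).1.1 rfl⟩,
    fun {v v'} => ((hs.compatible (hf v) (hf v')).2).symm⟩⟩

abbrev FinPartialIso (G : SimpleGraph V) (H : SimpleGraph W) : Type _ :=
  {s : Set (V × W) // s.Finite ∧ G.IsPartialIso H s}

def FinPartialIso.definedAtLeft (hH : H.HasExtensionProperty) (v : V) :
    Order.Cofinal (G.FinPartialIso H) where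
  carrier := {s | ∃ w, (v, w) ∈ s.1}
  isCofinal s := by
    obtain ⟨w, hw⟩ := s.2.2.exists_insert_left hH s.2.1 v
    exact ⟨⟨_, s.2.1.insert _, hw⟩, ⟨w, Set.mem_insert _ _⟩, Set.subset_insert _ _⟩

def FinPartialIso.definedAtRight (hG : G.HasExtensionProperty) (w : W) :
    Order.Cofinal (G.FinPartialIso H) where
  carrier := {s | ∃ v, (v, w) ∈ s.1}
  isCofinal s := by
    obtain ⟨v, hv⟩ := s.2.2.exists_insert_right hG s.2.1 w
    exact ⟨⟨_, s.2.1.insert _, hv⟩, ⟨v, Set.mem_insert _ _⟩, Set.subset_insert _ _⟩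

theorem FinPartialIso.isPartialIso_iUnion_ideal (I : Order.Ideal (G.FinPartialIso H)) :
    G.IsPartialIso H (⋃ t ∈ I, t.1) := by
  intro p hp q hq hpq
  simp only [Set.mem_iUnion] at hp hq
  obtain ⟨t, ht, hpt⟩ := hp
  obtain ⟨t', ht', hqt'⟩ := hq
  obtain ⟨u, -, htu, htu'⟩ := I.directed t ht t' ht'
  exact u.2.2 (htu hpt) (htu' hqt') hpq

theorem nonempty_iso_of_hasExtensionProperty [Countable V] [Countable W]
    (hG : G.HasExtensionProperty) (hH : H.HasExtensionProperty) : Nonempty (G ≃g H) := by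
  cases nonempty_encodable V
  cases nonempty_encodable W
  let 𝒟 : V ⊕ W → Order.Cofinal (G.FinPartialIso H) :=
    Sum.elim (FinPartialIso.definedAtLeft hH) (FinPartialIso.definedAtRight hG)
  let I := Order.idealOfCofinals ⟨∅, Set.finite_empty, Set.pairwise_empty _⟩ 𝒟
  refine (FinPartialIso.isPartialIso_iUnion_ideal I).nonempty_iso (fun v => ?_) (fun w => ?_)
  · obtain ⟨t, ⟨w, hw⟩, ht⟩ := Order.cofinal_meets_idealOfCofinals _ 𝒟 (.inl v)
    exact ⟨w, Set.mem_biUnion ht hw⟩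
  · obtain ⟨t, ⟨v, hv⟩, ht⟩ := Order.cofinal_meets_idealOfCofinals _ 𝒟 (.inr w)
    exact ⟨v, Set.mem_biUnion ht hv⟩

end SimpleGraph

theorem rado_indivisible {V : Type*} [Countable V] [DecidableEq V] (G : SimpleGraph V)
    (hext : ∀ A B : Finset V, Disjoint A B →
      ∃ v, v ∉ A ∪ B ∧ (∀ a ∈ A, G.Adj v a) ∧ ∀ b ∈ B, ¬ G.Adj v b)
    (R S : Set V) (hdisj : Disjoint R S) (hcover : R ∪ S = Set.univ) :
    Nonempty (G.induce R ≃g G) ∨ Nonempty (G.induce S ≃g G) := by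
  have hG : G.HasExtensionProperty := SimpleGraph.hasExtensionProperty_iff_finset.2 hext
  obtain rfl : Rᶜ = S := IsCompl.compl_eq ⟨hdisj, codisjoint_iff.2 hcover⟩
  exact (hG.induce_or_induce_compl R).imp
    (SimpleGraph.nonempty_iso_of_hasExtensionProperty · hG)
    (SimpleGraph.nonempty_iso_of_hasExtensionProperty · hG)
end

section
/- Let G be a subgroup of the symmetric group of a countable set U and define ρ as the G-age function on subsets of U. If S, T ⊆ U satisfy ρ(S) = ρ(T), then for every n ∈ ℕ, S is n-age indivisible if and only if T is n-age indivisible. -/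
/-!
Pass from a partition `Q` of `T` to a partition of `S` by compactness. For every finite `A`
pick `g_A ∈ G` sending `A ∩ S` into `T`, and fix an ultrafilter `u` on finite sets of `U`
containing every `{A | a ∈ A}`. Colour `a ∈ S` by the part `Q i` that contains `g_A a` for
`u`-almost every `A`. A finite set mapped by `h ∈ G` into one colour class `P i` is then mapped
into `Q i` by `g_A * h` for some `A`, so `age (P i) ⊆ age (Q i)`. Hence if `P i` has the age of
`S`, which is the age of `T`, then so does `Q i`.
-/

/-- The `G`-age of a set `S`: finite subsets of `U` that can be mapped into `S`
by some element of `G`. -/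
def Gage {U : Type*} (G : Subgroup (Equiv.Perm U)) (S : Set U) : Set (Finset U) :=
  {A | ∃ g ∈ G, ∀ a ∈ A, g a ∈ S}

/-- `P` is a partition of `S` into `n` parts. -/
def IsPartitionInto {U : Type*} (S : Set U) (n : ℕ) (P : Fin n → Set U) : Prop :=
  (∀ i j, i ≠ j → Disjoint (P i) (P j)) ∧ (⋃ i, P i) = S

/-- `S` is `n`-age indivisible for `G`. -/
def NAgeIndivisible {U : Type*} (G : Subgroup (Equiv.Perm U)) (S : Set U) (n : ℕ) : Prop :=
  ∀ P : Fin n → Set U, IsPartitionInto S n P → ∃ i, Gage G (P i) = Gage G S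

section Gage

variable {U : Type*} (G : Subgroup (Equiv.Perm U))

theorem gage_mono {S T : Set U} (h : S ⊆ T) : Gage G S ⊆ Gage G T :=
  fun _ ⟨g, hg, hgS⟩ => ⟨g, hg, fun a ha => h (hgS a ha)⟩

theorem exists_perm_mapsTo_of_gage_subset {S T : Set U} (hST : Gage G S ⊆ Gage G T)
    (A : Finset U) : ∃ g ∈ G, ∀ a ∈ A, a ∈ S → g a ∈ T := by
  classical
  have hAS : {a ∈ A | a ∈ S} ∈ Gage G S :=
    ⟨1, one_mem G, fun a ha => (Finset.mem_filter.mp ha).2⟩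
  obtain ⟨g, hg, hgT⟩ := hST hAS
  exact ⟨g, hg, fun a ha haS => hgT a (Finset.mem_filter.mpr ⟨ha, haS⟩)⟩

theorem exists_partition_gage_subset_of_gage_subset {S T : Set U}
    (hST : Gage G S ⊆ Gage G T) {n : ℕ} {Q : Fin n → Set U} (hQ : IsPartitionInto T n Q) :
    ∃ P : Fin n → Set U, IsPartitionInto S n P ∧ ∀ i, Gage G (P i) ⊆ Gage G (Q i) := by
  choose g hgG hgT using exists_perm_mapsTo_of_gage_subset G hST
  let u : Ultrafilter (Finset U) := .of Filter.atTop
  have eventually_mem : ∀ a, ∀ᶠ A in (u : Filter (Finset U)), a ∈ A := fun a =>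
    Ultrafilter.of_le _ <|
      (Filter.eventually_ge_atTop {a}).mono fun _ hA => hA (Finset.mem_singleton_self a)
  refine ⟨fun i => {a ∈ S | ∀ᶠ A in (u : Filter (Finset U)), g A a ∈ Q i}, ⟨?_, ?_⟩, ?_⟩
  · intro i j hij
    refine Set.disjoint_left.mpr fun a ⟨_, hi⟩ ⟨_, hj⟩ => ?_
    obtain ⟨A, hAi, hAj⟩ := (hi.and hj).exists
    exact Set.disjoint_left.mp (hQ.1 i j hij) hAi hAj
  · ext a
    simp only [Set.mem_iUnion, Set.mem_ofPred_eq]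
    refine ⟨fun ⟨_, ha, _⟩ => ha, fun ha => ?_⟩
    have hcover : ∀ᶠ A in (u : Filter (Finset U)), ∃ i, g A a ∈ Q i :=
      (eventually_mem a).mono fun A hA => Set.mem_iUnion.mp (hQ.2 ▸ hgT A a hA ha)
    exact (Ultrafilter.eventually_exists_iff.mp hcover).imp fun _ hi => ⟨ha, hi⟩
  · rintro i B ⟨h, hh, hB⟩
    have hmaps : ∀ᶠ A in (u : Filter (Finset U)), ∀ b ∈ B, g A (h b) ∈ Q i :=
      (Filter.eventually_all_finset B).mpr fun b hb => (hB b hb).2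
    obtain ⟨A, hA⟩ := hmaps.exists
    exact ⟨g A * h, mul_mem (hgG A) hh, hA⟩

theorem NAgeIndivisible.of_gage_eq {S T : Set U} {n : ℕ} (hS : NAgeIndivisible G S n)
    (hST : Gage G S = Gage G T) : NAgeIndivisible G T n := by
  intro Q hQ
  obtain ⟨P, hP, hPQ⟩ := exists_partition_gage_subset_of_gage_subset G hST.le hQ
  obtain ⟨i, hi⟩ := hS P hP
  refine ⟨i, (gage_mono G (hQ.2 ▸ Set.subset_iUnion Q i)).antisymm ?_⟩
  rw [← hST, ← hi]
  exact hPQ i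

end Gage

theorem nAgeIndivisible_age_invariant_general {U : Type*}
    (G : Subgroup (Equiv.Perm U)) (S T : Set U) (h : Gage G S = Gage G T) (n : ℕ) :
    NAgeIndivisible G S n ↔ NAgeIndivisible G T n :=
  ⟨fun hS => hS.of_gage_eq G h, fun hT => hT.of_gage_eq G h.symm⟩

theorem nAgeIndivisible_age_invariant {U : Type*} [Countable U] [Infinite U]
    (G : Subgroup (Equiv.Perm U)) (S T : Set U) (h : Gage G S = Gage G T) (n : ℕ) :
    NAgeIndivisible G S n ↔ NAgeIndivisible G T n :=
  nAgeIndivisible_age_invariant_general G S T h n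
end
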